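/- Let V : ℝ → [0,∞) be measurable and locally integrable, let ε > 0, and suppose that ∫_{{|x|≥1}} |x| V(x) / (ln(1+|x|))^{1+ε} dx = ∞. Then there exists a sequence (ψ_n)_{n≥1} of nonzero smooth compactly supported functions ℝ → ℂ with pairwise disjoint supports such that Q_V(ψ_n) < 0 for every n; in particular, for every N there is an N-dimensional subspace of C_c^∞(ℝ) on which Q_V is negative definite. -/

import Mathlib

open MeasureTheory
open scoped ENNReal

/-- Quadratic form of the one-dimensional Schrödinger operator `H = -d²/dx² - V`. -/
noncomputable def schrodingerForm1D (V : ℝ → ℝ) (ψ : ℝ → ℂ) : ℝ :=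
  ∫ x : ℝ, (‖deriv ψ x‖ ^ 2 - V x * ‖ψ x‖ ^ 2)

/-!
Let `φ` be a smooth bump equal to `1` on the shell `1 ≤ |x| ≤ 2` and `ψₙ(x) = φ(x / 2ⁿ)`.
By scaling, the kinetic energy of `ψₙ` is `K / 2ⁿ` with `K = ∫ |φ'|²`, while its potential
energy is at least the mass of `V` on the shell `2ⁿ ≤ |x| ≤ 2ⁿ⁺¹`; so `Q_V(ψₙ) < 0` as soon as
that mass exceeds `K / 2ⁿ`. If this happened for only finitely many `n`, then, since
`|x| / ln(1 + |x|)^p ≤ 2ⁿ⁺¹ / ln(1 + 2ⁿ)^p` on the `n`-th shell, the divergent integral would be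
bounded by finitely many finite terms plus `∑ 2K / ln(1 + 2ⁿ)^p ≲ ∑ n^(-p) < ∞` (`p = 1 + ε`).
Keeping every other such `n` makes the supports disjoint.
-/

open Real Set Function Filter

theorem Set.Infinite.exists_seq_add_two_le {S : Set ℕ} (hS : S.Infinite) :
    ∃ e : ℕ → ℕ, (∀ k, e k ∈ S) ∧ ∀ j k, j < k → e j + 2 ≤ e k := by
  have hmono := Nat.nth_strictMono hS
  refine ⟨fun k => Nat.nth (· ∈ S) (2 * k), fun k => Nat.nth_mem_of_infinite hS _,
    fun j k hjk => ?_⟩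
  calc Nat.nth (· ∈ S) (2 * j) + 2 = 2 + Nat.nth (· ∈ S) (2 * j) := add_comm _ _
    _ ≤ Nat.nth (· ∈ S) (2 + 2 * j) := hmono.add_le_nat 2 _
    _ ≤ Nat.nth (· ∈ S) (2 * k) := hmono.monotone (by omega)

theorem HasCompactSupport.comp_div_const {E : Type*} [Zero E] {f : ℝ → E}
    (hf : HasCompactSupport f) {R : ℝ} (hR : R ≠ 0) : HasCompactSupport fun x => f (x / R) := by
  simpa only [smul_eq_mul, ← div_eq_inv_mul] using hf.comp_smul (inv_ne_zero hR)

theorem integral_norm_deriv_comp_div_sq {E : Type*} [NormedAddCommGroup E] [NormedSpace ℝ E]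
    (f : ℝ → E) (R : ℝ) :
    ∫ x, ‖deriv (fun x => f (x / R)) x‖ ^ 2 = |R|⁻¹ * ∫ x, ‖deriv f x‖ ^ 2 := by
  have hderiv : ∀ x, deriv (fun x => f (x / R)) x = R⁻¹ • deriv f (R⁻¹ * x) := by
    intro x
    simp only [div_eq_inv_mul]
    exact deriv_comp_mul_left R⁻¹ f x
  simp only [hderiv, norm_smul, mul_pow, Real.norm_eq_abs, integral_const_mul,
    Measure.integral_comp_mul_left (fun y => ‖deriv f y‖ ^ 2), smul_eq_mul, inv_inv, abs_inv]
  rcases eq_or_ne R 0 with rfl | hR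
  · simp
  · rw [← mul_assoc, sq, mul_assoc _ _ |R|, inv_mul_cancel₀ (abs_ne_zero.2 hR), mul_one]

theorem schrodingerForm1D_le_sub_setIntegral {V : ℝ → ℝ} (hV0 : ∀ x, 0 ≤ V x)
    (hV : LocallyIntegrable V volume) {ψ : ℝ → ℂ} (hψ : ContDiff ℝ 1 ψ)
    (hψc : HasCompactSupport ψ) {s : Set ℝ} (hs : MeasurableSet s)
    (hψs : ∀ x ∈ s, 1 ≤ ‖ψ x‖) :
    schrodingerForm1D V ψ ≤ (∫ x, ‖deriv ψ x‖ ^ 2) - ∫ x in s, V x := by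
  have hkin : Integrable fun x => ‖deriv ψ x‖ ^ 2 := by
    have hc : Continuous (deriv ψ) := hψ.continuous_deriv le_rfl
    have hcs : HasCompactSupport fun x => ‖deriv ψ x‖ ^ 2 :=
      hψc.deriv.norm.comp_left (g := (· ^ 2)) (zero_pow two_ne_zero)
    exact (hc.norm.pow 2).integrable_of_hasCompactSupport hcs
  have hpot : Integrable fun x => V x * ‖ψ x‖ ^ 2 :=
    hV.integrable_smul_right_of_hasCompactSupport (g := fun x => ‖ψ x‖ ^ 2)
      (hψ.continuous.norm.pow 2) (hψc.norm.comp_left (g := (· ^ 2)) (zero_pow two_ne_zero))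
  have hpot_nonneg : ∀ x, 0 ≤ V x * ‖ψ x‖ ^ 2 := fun x => mul_nonneg (hV0 x) (by positivity)
  have hlower : ∫ x in s, V x ≤ ∫ x, V x * ‖ψ x‖ ^ 2 :=
    calc ∫ x in s, V x ≤ ∫ x in s, V x * ‖ψ x‖ ^ 2 :=
          integral_mono_of_nonneg (.of_forall hV0) hpot.integrableOn <|
            (ae_restrict_of_forall_mem hs) fun x hx =>
              le_mul_of_one_le_right (hV0 x) (one_le_pow₀ (hψs x hx))
      _ ≤ ∫ x, V x * ‖ψ x‖ ^ 2 := setIntegral_le_integral hpot (.of_forall hpot_nonneg)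
  rw [schrodingerForm1D, integral_sub hkin hpot]
  linarith

def dyadicShell (n : ℕ) : Set ℝ := {x | 2 ^ n ≤ |x| ∧ |x| ≤ 2 ^ (n + 1)}

theorem isCompact_dyadicShell (n : ℕ) : IsCompact (dyadicShell n) :=
  (isCompact_closedBall (0 : ℝ) (2 ^ (n + 1))).of_isClosed_subset
    ((isClosed_le continuous_const continuous_abs).inter
      (isClosed_le continuous_abs continuous_const))
    fun x hx => by simpa only [mem_closedBall_zero_iff, Real.norm_eq_abs] using hx.2

theorem subset_iUnion_dyadicShell : {x : ℝ | 1 ≤ |x|} ⊆ ⋃ n, dyadicShell n := fun _ hx =>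
  let ⟨n, hn, hn'⟩ := exists_nat_pow_near hx one_lt_two
  mem_iUnion.2 ⟨n, hn, hn'.le⟩

theorem div_two_pow_mem_dyadicShell_zero {n : ℕ} {x : ℝ} (hx : x ∈ dyadicShell n) :
    x / 2 ^ n ∈ dyadicShell 0 := by
  have h2n : (0 : ℝ) < 2 ^ n := by positivity
  rw [dyadicShell, mem_ofPred_eq, abs_div, abs_of_pos h2n, pow_zero, zero_add, pow_one,
    le_div_iff₀ h2n, div_le_iff₀ h2n, one_mul, ← pow_succ']
  exact hx

-- `8 / 3 = 4 * (2 / 3)`: the supports of the rescalings by `2ⁿ` and `2ⁿ⁺²` are disjoint.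
theorem exists_contDiff_eq_one_on_dyadicShell_zero :
    ∃ f : ℝ → ℂ, ContDiff ℝ (⊤ : ℕ∞) f ∧ HasCompactSupport f ∧ (∀ x ∈ dyadicShell 0, f x = 1) ∧
      support f ⊆ {x | 2 / 3 < |x| ∧ |x| < 8 / 3} := by
  let g : ContDiffBump (5 / 2 : ℝ) := ⟨3 / 2, 2, by norm_num, by norm_num⟩
  have hsupp : support (fun x : ℝ => (g (x ^ 2) : ℂ)) ⊆ {x | 2 / 3 < |x| ∧ |x| < 8 / 3} := by
    intro x hx
    have hx' : x ^ 2 ∈ Metric.ball (5 / 2 : ℝ) 2 := by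
      rw [← g.support_eq]
      simpa using hx
    rw [Metric.mem_ball, Real.dist_eq, abs_lt, ← sq_abs] at hx'
    constructor <;> nlinarith [abs_nonneg x]
  refine ⟨fun x => (g (x ^ 2) : ℂ), ?_, ?_, fun x hx => ?_, hsupp⟩
  · exact Complex.ofRealCLM.contDiff.comp (g.contDiff.comp (contDiff_id.pow 2))
  · refine HasCompactSupport.intro (isCompact_closedBall 0 3) fun x hx => ?_
    by_contra hx0
    rw [mem_closedBall_zero_iff, Real.norm_eq_abs] at hx
    linarith [(hsupp hx0).2]
  · simp only [dyadicShell, pow_zero, zero_add, pow_one, mem_ofPred_eq] at hx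
    have hx' : x ^ 2 ∈ Metric.closedBall (5 / 2 : ℝ) (3 / 2) := by
      rw [Metric.mem_closedBall, Real.dist_eq, abs_le, ← sq_abs]
      constructor <;> nlinarith
    simp [g.one_of_mem_closedBall hx']

theorem disjoint_support_comp_div_two_pow {f : ℝ → ℂ}
    (hf : support f ⊆ {x | 2 / 3 < |x| ∧ |x| < 8 / 3}) {m n : ℕ} (hmn : m + 2 ≤ n) :
    Disjoint (support fun x => f (x / 2 ^ m)) (support fun x => f (x / 2 ^ n)) := by
  refine disjoint_left.2 fun x hxm hxn => ?_
  have hm := (hf hxm).2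
  have hn := (hf hxn).1
  have h2m : (0 : ℝ) < 2 ^ m := by positivity
  have h2n : (2 : ℝ) ^ m * 4 ≤ 2 ^ n := by
    calc (2 : ℝ) ^ m * 4 = 2 ^ (m + 2) := by ring
      _ ≤ 2 ^ n := pow_le_pow_right₀ one_le_two hmn
  rw [abs_div, abs_of_pos h2m, div_lt_iff₀ h2m] at hm
  rw [abs_div, abs_of_pos (by positivity : (0 : ℝ) < 2 ^ n), lt_div_iff₀ (by positivity)] at hn
  linarith

theorem schrodingerForm1D_comp_div_two_pow_neg {V : ℝ → ℝ} (hV0 : ∀ x, 0 ≤ V x)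
    (hV : LocallyIntegrable V volume) {f : ℝ → ℂ} (hf : ContDiff ℝ 1 f)
    (hfc : HasCompactSupport f) (hf1 : ∀ x ∈ dyadicShell 0, f x = 1) {n : ℕ}
    (hn : (∫ x, ‖deriv f x‖ ^ 2) / 2 ^ n < ∫ x in dyadicShell n, V x) :
    schrodingerForm1D V (fun x => f (x / 2 ^ n)) < 0 := by
  have hψ1 : ∀ x ∈ dyadicShell n, 1 ≤ ‖f (x / 2 ^ n)‖ := fun x hx => by
    rw [hf1 _ (div_two_pow_mem_dyadicShell_zero hx), norm_one]
  calc schrodingerForm1D V (fun x => f (x / 2 ^ n))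
      ≤ (∫ x, ‖deriv (fun x => f (x / 2 ^ n)) x‖ ^ 2) - ∫ x in dyadicShell n, V x :=
        schrodingerForm1D_le_sub_setIntegral hV0 hV (hf.comp (contDiff_id.div_const _))
          (hfc.comp_div_const (pow_ne_zero _ two_ne_zero))
          (isCompact_dyadicShell n).measurableSet hψ1
    _ = (∫ x, ‖deriv f x‖ ^ 2) / 2 ^ n - ∫ x in dyadicShell n, V x := by
        rw [integral_norm_deriv_comp_div_sq, abs_of_pos (by positivity), inv_mul_eq_div]
    _ < 0 := sub_neg.2 hn

theorem log_one_add_two_pow_pos (n : ℕ) : 0 < log (1 + 2 ^ n) :=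
  log_pos (lt_add_of_pos_right 1 (by positivity))

theorem lintegral_dyadicShell_le {V : ℝ → ℝ} (hV0 : ∀ x, 0 ≤ V x)
    (hV : LocallyIntegrable V volume) {p : ℝ} (hp : 0 ≤ p) (n : ℕ) :
    ∫⁻ x in dyadicShell n, ENNReal.ofReal (|x| * V x / log (1 + |x|) ^ p) ≤
      ENNReal.ofReal (2 ^ (n + 1) / log (1 + 2 ^ n) ^ p * ∫ x in dyadicShell n, V x) := by
  have hlog := log_one_add_two_pow_pos n
  rw [← integral_const_mul, ofReal_integral_eq_lintegral_ofReal
    ((hV.integrableOn_isCompact (isCompact_dyadicShell n)).const_mul _)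
    (.of_forall fun x => mul_nonneg (by positivity) (hV0 x))]
  refine lintegral_mono_ae <| (ae_restrict_of_forall_mem (isCompact_dyadicShell n).measurableSet)
    fun x hx => ENNReal.ofReal_le_ofReal ?_
  have hlog_le : log (1 + 2 ^ n) ^ p ≤ log (1 + |x|) ^ p :=
    rpow_le_rpow hlog.le (log_le_log (by positivity) (by linarith [hx.1])) hp
  rw [div_mul_eq_mul_div]
  exact div_le_div₀ (mul_nonneg (by positivity) (hV0 x))
    (mul_le_mul_of_nonneg_right hx.2 (hV0 x)) (by positivity) hlog_le

theorem summable_one_div_log_one_add_two_pow_rpow {p : ℝ} (hp : 1 < p) :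
    Summable fun n : ℕ => 1 / log (1 + 2 ^ n) ^ p := by
  refine .of_norm_bounded_eventually_nat
    ((Real.summable_one_div_nat_rpow.2 hp).mul_left (log 2 ^ p)⁻¹) ?_
  filter_upwards [eventually_ge_atTop 1] with n hn
  have hn' : (1 : ℝ) ≤ n := by exact_mod_cast hn
  have hlog2 : 0 < log 2 := log_pos one_lt_two
  have hlog : n * log 2 ≤ log (1 + 2 ^ n) := by
    rw [← Real.log_pow]
    exact log_le_log (by positivity) (by linarith)
  have hlog_pos := log_one_add_two_pow_pos n
  rw [Real.norm_of_nonneg (by positivity)]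
  calc 1 / log (1 + 2 ^ n) ^ p ≤ 1 / (n * log 2) ^ p :=
        one_div_le_one_div_of_le (by positivity) (rpow_le_rpow (by positivity) hlog (by linarith))
    _ = (log 2 ^ p)⁻¹ * (1 / n ^ p) := by
        rw [mul_rpow (by positivity) hlog2.le]
        field_simp

theorem infinite_setOf_lt_integral_dyadicShell {V : ℝ → ℝ} (hV0 : ∀ x, 0 ≤ V x)
    (hV : LocallyIntegrable V volume) {p : ℝ} (hp : 1 < p)
    (hdiv : ∫⁻ x in {x : ℝ | 1 ≤ |x|}, ENNReal.ofReal (|x| * V x / log (1 + |x|) ^ p) = ∞)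
    (K : ℝ) : {n : ℕ | K / 2 ^ n < ∫ x in dyadicShell n, V x}.Infinite := by
  intro hfin
  set c : ℕ → ℝ := fun n => 2 ^ (n + 1) / log (1 + 2 ^ n) ^ p
  have hc : ∀ n, 0 ≤ c n := fun n => by have := log_one_add_two_pow_pos n; positivity
  have hterm : ∀ n, 0 ≤ c n * ∫ x in dyadicShell n, V x := fun n =>
    mul_nonneg (hc n) (setIntegral_nonneg_of_ae_restrict (.of_forall hV0))
  have hsum : Summable fun n => c n * ∫ x in dyadicShell n, V x := by
    refine .of_norm_bounded_eventually
      ((summable_one_div_log_one_add_two_pow_rpow hp).mul_left (2 * K)) ?_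
    filter_upwards [hfin.eventually_cofinite_notMem] with n hn
    have hlog := log_one_add_two_pow_pos n
    rw [Real.norm_of_nonneg (hterm n)]
    calc c n * ∫ x in dyadicShell n, V x ≤ c n * (K / 2 ^ n) :=
          mul_le_mul_of_nonneg_left (not_lt.1 hn) (hc n)
      _ = 2 * K * (1 / log (1 + 2 ^ n) ^ p) := by
          simp only [c]
          field_simp
          ring
  refine ENNReal.ofReal_ne_top (r := ∑' n, c n * ∫ x in dyadicShell n, V x) ?_
  rw [ENNReal.ofReal_tsum_of_nonneg hterm hsum, eq_top_iff, ← hdiv]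
  calc ∫⁻ x in {x : ℝ | 1 ≤ |x|}, ENNReal.ofReal (|x| * V x / log (1 + |x|) ^ p)
      ≤ ∫⁻ x in ⋃ n, dyadicShell n, ENNReal.ofReal (|x| * V x / log (1 + |x|) ^ p) :=
        lintegral_mono_set subset_iUnion_dyadicShell
    _ ≤ ∑' n, ∫⁻ x in dyadicShell n, ENNReal.ofReal (|x| * V x / log (1 + |x|) ^ p) :=
        lintegral_iUnion_le _ _
    _ ≤ ∑' n, ENNReal.ofReal (c n * ∫ x in dyadicShell n, V x) :=
        ENNReal.tsum_le_tsum fun n => lintegral_dyadicShell_le hV0 hV (by linarith) n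

theorem infinitely_many_negative_eigenvalues_1d_general
    (V : ℝ → ℝ) (hV0 : ∀ x, 0 ≤ V x)
    (hVloc : LocallyIntegrable V volume) (ε : ℝ) (hε : 0 < ε)
    (hdiv : ∫⁻ x in {x : ℝ | 1 ≤ |x|},
      ENNReal.ofReal (|x| * V x / Real.log (1 + |x|) ^ (1 + ε)) = ∞) :
    ∃ ψ : ℕ → ℝ → ℂ,
      (∀ n, ψ n ≠ 0 ∧ ContDiff ℝ (⊤ : ℕ∞) (ψ n) ∧ HasCompactSupport (ψ n) ∧
        schrodingerForm1D V (ψ n) < 0) ∧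
      ∀ m n, m ≠ n → Disjoint (Function.support (ψ m)) (Function.support (ψ n)) := by
  obtain ⟨f, hf, hfc, hf1, hfsupp⟩ := exists_contDiff_eq_one_on_dyadicShell_zero
  obtain ⟨e, he, hgap⟩ := (infinite_setOf_lt_integral_dyadicShell hV0 hVloc
    (by linarith : 1 < 1 + ε) hdiv (∫ x, ‖deriv f x‖ ^ 2)).exists_seq_add_two_le
  refine ⟨fun k x => f (x / 2 ^ e k), fun k => ⟨?_, ?_, ?_, ?_⟩, fun j k hjk => ?_⟩
  · intro h
    have h1 : f (2 ^ e k / 2 ^ e k) = 0 := congrFun h (2 ^ e k)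
    rw [div_self (pow_ne_zero _ two_ne_zero), hf1 1 (by norm_num [dyadicShell])] at h1
    exact one_ne_zero h1
  · exact hf.comp (contDiff_id.div_const _)
  · exact hfc.comp_div_const (pow_ne_zero _ two_ne_zero)
  · exact schrodingerForm1D_comp_div_two_pow_neg hV0 hVloc (hf.of_le (mod_cast le_top)) hfc hf1
      (he k)
  · rcases hjk.lt_or_gt with h | h
    · exact disjoint_support_comp_div_two_pow hfsupp (hgap j k h)
    · exact (disjoint_support_comp_div_two_pow hfsupp (hgap k j h)).symm

/-- If `∫_{|x|≥1} |x| V(x) / ln^{1+ε}(1+|x|) dx = ∞`, then the one-dimensional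
Schrödinger operator `-d²/dx² - V` has infinitely many negative eigenvalues: there
is a sequence of nonzero smooth compactly supported functions with pairwise disjoint
supports on which the quadratic form is negative. -/
theorem infinitely_many_negative_eigenvalues_1d
    (V : ℝ → ℝ) (hV0 : ∀ x, 0 ≤ V x) (hVmeas : Measurable V)
    (hVloc : LocallyIntegrable V volume) (ε : ℝ) (hε : 0 < ε)
    (hdiv : ∫⁻ x in {x : ℝ | 1 ≤ |x|},
      ENNReal.ofReal (|x| * V x / Real.log (1 + |x|) ^ (1 + ε)) = ∞) :
    ∃ ψ : ℕ → ℝ → ℂ,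
      (∀ n, ψ n ≠ 0 ∧ ContDiff ℝ (⊤ : ℕ∞) (ψ n) ∧ HasCompactSupport (ψ n) ∧
        schrodingerForm1D V (ψ n) < 0) ∧
      ∀ m n, m ≠ n → Disjoint (Function.support (ψ m)) (Function.support (ψ n)) :=
  infinitely_many_negative_eigenvalues_1d_general V hV0 hVloc ε hε hdiv
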